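/- Let A be a ring and I an injective left A-module. Then I is indecomposable if and only if its endomorphism ring End_A(I) is local; moreover, in that case an endomorphism f of I is a unit if and only if ker(f) = 0. -/

import Mathlib

/-!
Indecomposability of `M` says exactly that `End A M` has no idempotents other than `0` and `1`,
which is the case in a local ring.

Conversely let `I` be injective and indecomposable. An injective endomorphism `f` has a left
inverse `g`, and the idempotent `f * g` must be `1`, so `f` is a unit. Two nonzero submodules of `I`
meet nontrivially: otherwise Zorn enlarges them to submodules `N`, `C`, each maximal among those
disjoint from the other; then `N` embeds essentially into `I ⧸ C`, and extending `N ↪ I` along this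
embedding gives an idempotent endomorphism with range `N` and kernel `C`, a forbidden splitting.
Hence if `f` and `1 - f` were both nonunits, their kernels would be nonzero submodules meeting
trivially; so `End A I` is local.
-/

/-- A module is indecomposable if it is nonzero and is not the direct sum of two nonzero
submodules. -/
def Module.Indecomposable (A : Type*) [Ring A] (M : Type*) [AddCommGroup M]
    [Module A M] : Prop :=
  Nontrivial M ∧ ∀ N N' : Submodule A M, IsCompl N N' → N = ⊥ ∨ N' = ⊥

theorem isUnit_of_mul_eq_one_of_forall_isIdempotentElem {R : Type*} [MonoidWithZero R]
    (hR : ∀ e : R, IsIdempotentElem e → e = 0 ∨ e = 1) {a b : R} (h : b * a = 1) :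
    IsUnit a := by
  have he : IsIdempotentElem (a * b) := by
    rw [IsIdempotentElem, mul_assoc, ← mul_assoc b, h, one_mul]
  rcases hR _ he with h0 | h1
  · have : Subsingleton R := subsingleton_of_zero_eq_one <| Eq.symm <|
      calc (1 : R) = b * a * (b * a) := by rw [h, one_mul]
        _ = b * (a * b) * a := by simp only [mul_assoc]
        _ = 0 := by rw [h0, mul_zero, zero_mul]
    exact isUnit_of_subsingleton a
  · exact ⟨⟨a, b, h1, h⟩, rfl⟩

theorem IsLocalRing.eq_zero_or_one_of_isIdempotentElem {R : Type*} [Ring R] [IsLocalRing R]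
    {e : R} (he : IsIdempotentElem e) : e = 0 ∨ e = 1 := by
  rcases IsLocalRing.isUnit_or_isUnit_of_add_one (add_sub_cancel e 1) with hu | hu
  · exact .inr ((IsIdempotentElem.iff_eq_one_of_isUnit hu).1 he)
  · exact .inl (sub_eq_self.1 ((IsIdempotentElem.iff_eq_one_of_isUnit hu).1 he.one_sub))

theorem exists_le_maximal_disjoint {α : Type*} [CompleteLattice α] [IsCompactlyGenerated α]
    {a b : α} (hab : Disjoint a b) : ∃ c, b ≤ c ∧ Maximal (Disjoint a) c :=
  zorn_le_nonempty₀ _ (fun s hs hchain _ _ =>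
    ⟨sSup s, (hchain.directedOn.disjoint_sSup_right).2 hs, fun _ => le_sSup⟩) b hab

namespace Module

variable {A M : Type*} [Ring A] [AddCommGroup M] [Module A M]

theorem indecomposable_iff_isIdempotentElem :
    Indecomposable A M ↔
      Nontrivial M ∧ ∀ e : End A M, IsIdempotentElem e → e = 0 ∨ e = 1 := by
  refine and_congr_right fun _ => ⟨fun h e he => ?_, fun h N N' hNN' => ?_⟩
  · refine (h _ _ (LinearMap.IsIdempotentElem.isCompl he)).imp LinearMap.range_eq_bot.1
      fun hker => LinearMap.ext fun x => LinearMap.ker_eq_bot.1 hker ?_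
    exact congr($(he.eq) x)
  · refine (h _ (Submodule.isIdempotentElem_projection hNN')).imp (fun h0 => ?_) fun h1 => ?_
    · rw [← Submodule.range_projection hNN', h0, LinearMap.range_zero]
    · rw [← Submodule.ker_projection hNN', h1, Module.End.one_eq_id, LinearMap.ker_id]

theorem Indecomposable.of_isLocalRing_end [IsLocalRing (End A M)] : Indecomposable A M := by
  refine indecomposable_iff_isIdempotentElem.2
    ⟨?_, fun _ => IsLocalRing.eq_zero_or_one_of_isIdempotentElem⟩
  exact (subsingleton_or_nontrivial M).resolve_left fun _ =>
    not_subsingleton (End A M) inferInstance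

end Module

namespace Submodule

variable {A M : Type*} [Ring A] [AddCommGroup M] [Module A M]

theorem exists_smul_mkQ_eq_of_maximal_disjoint {N C : Submodule A M}
    (hC : Maximal (Disjoint N) C) {y : M ⧸ C} (hy : y ≠ 0) :
    ∃ a : A, ∃ m ∈ N, m ≠ 0 ∧ C.mkQ m = a • y := by
  obtain ⟨x, rfl⟩ := C.mkQ_surjective y
  have hx : x ∉ C := fun hx => hy ((Quotient.mk_eq_zero C).2 hx)
  have hlt : C < C ⊔ span A {x} :=
    lt_of_le_of_ne le_sup_left fun h => hx (h ▸ mem_sup_right (mem_span_singleton_self x))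
  obtain ⟨m, hmN, hmCx, hm0⟩ : ∃ m ∈ N, m ∈ C ⊔ span A {x} ∧ m ≠ 0 := by
    simpa [disjoint_def] using hC.not_prop_of_gt hlt
  obtain ⟨c, hc, z, hz, rfl⟩ := mem_sup.1 hmCx
  obtain ⟨a, rfl⟩ := mem_span_singleton.1 hz
  refine ⟨a, _, hmN, hm0, ?_⟩
  rw [map_add, mkQ_apply, (Quotient.mk_eq_zero C).2 hc, zero_add, map_smul]

theorem isCompl_of_maximal_disjoint [Module.Injective A M] {N C : Submodule A M}
    (hN : Maximal (Disjoint C) N) (hC : Maximal (Disjoint N) C) : IsCompl N C := by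
  have hinj : Function.Injective (C.mkQ ∘ₗ N.subtype) := by
    rw [← LinearMap.ker_eq_bot, LinearMap.ker_comp, ker_mkQ, ← disjoint_iff_comap_eq_bot]
    exact hC.prop
  obtain ⟨ψ, hψ⟩ := Module.Injective.out _ hinj N.subtype
  have hψN : ∀ m ∈ N, ψ (C.mkQ m) = m := fun m hm => hψ ⟨m, hm⟩
  have eq_zero_of_mem : ∀ y, ψ y ∈ C → y = 0 := by
    intro y hyC
    by_contra hy
    obtain ⟨a, m, hmN, hm0, hmy⟩ := exists_smul_mkQ_eq_of_maximal_disjoint hC hy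
    have hm : a • ψ y = m := by rw [← map_smul, ← hmy, hψN m hmN]
    exact hm0 (disjoint_def.1 hC.prop m hmN (hm ▸ C.smul_mem a hyC))
  set π : Module.End A M := ψ ∘ₗ C.mkQ
  have hker : LinearMap.ker π = C := by
    ext x
    refine ⟨fun hx => ?_, fun hx => ?_⟩
    · exact (Quotient.mk_eq_zero C).1 (eq_zero_of_mem _ ((show π x = 0 from hx) ▸ C.zero_mem))
    · simp [π, (Quotient.mk_eq_zero C).2 hx]
  have hrange : LinearMap.range π = N := by
    refine hN.eq_of_ge (disjoint_def.2 ?_) fun m hm => ⟨m, hψN m hm⟩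
    rintro _ hxC ⟨x, rfl⟩
    simp [π, eq_zero_of_mem _ hxC]
  have hidem : IsIdempotentElem π :=
    LinearMap.ext fun x => hψN (π x) (hrange ▸ LinearMap.mem_range_self π x)
  simpa only [hrange, hker] using LinearMap.IsIdempotentElem.isCompl hidem

end Submodule

namespace Module.Indecomposable

variable {A M : Type*} [Ring A] [AddCommGroup M] [Module A M] [Module.Injective A M]

theorem not_disjoint (h : Indecomposable A M) {N N' : Submodule A M} (hN : N ≠ ⊥)
    (hN' : N' ≠ ⊥) : ¬Disjoint N N' := by
  intro hNN'
  obtain ⟨C, hN'C, hC⟩ := exists_le_maximal_disjoint hNN'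
  obtain ⟨P, hNP, hP⟩ := exists_le_maximal_disjoint hC.prop.symm
  have hCP : Maximal (Disjoint P) C := hC.mono (fun _ hD => hD.mono_left hNP) hP.prop.symm
  rcases h.2 P C (Submodule.isCompl_of_maximal_disjoint hP hCP) with hP0 | hC0
  · exact hN (le_bot_iff.1 (hP0 ▸ hNP))
  · exact hN' (le_bot_iff.1 (hC0 ▸ hN'C))

theorem isUnit_of_injective (h : Indecomposable A M) {f : End A M}
    (hf : Function.Injective f) : IsUnit f := by
  obtain ⟨g, hg⟩ := Module.Injective.out f hf LinearMap.id
  exact isUnit_of_mul_eq_one_of_forall_isIdempotentElem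
    (indecomposable_iff_isIdempotentElem.1 h).2 (LinearMap.ext hg)

theorem isLocalRing_end (h : Indecomposable A M) : IsLocalRing (End A M) := by
  have := h.1
  refine IsLocalRing.of_isUnit_or_isUnit_one_sub_self fun f => ?_
  by_contra! hf
  have ker_ne_bot {g : End A M} (hg : ¬IsUnit g) : LinearMap.ker g ≠ ⊥ :=
    fun hk => hg (h.isUnit_of_injective (LinearMap.ker_eq_bot.1 hk))
  refine h.not_disjoint (ker_ne_bot hf.1) (ker_ne_bot hf.2) (Submodule.disjoint_def.2 ?_)
  intro x hx hx'
  simpa [LinearMap.mem_ker.1 hx] using hx'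

end Module.Indecomposable

/-- Let `A` be a ring and `I` an injective left `A`-module.  Then `I` is indecomposable
if and only if its endomorphism ring is local; moreover, in that case an endomorphism
`f` of `I` is a unit if and only if `ker f = 0`. -/
theorem indecomposable_injective_iff_isLocalRing_end
    {A : Type*} [Ring A] (I : Type*) [AddCommGroup I] [Module A I]
    [Module.Injective A I] :
    (Module.Indecomposable A I ↔ IsLocalRing (Module.End A I)) ∧
    (Module.Indecomposable A I →
      ∀ f : Module.End A I, IsUnit f ↔ LinearMap.ker f = ⊥) :=
  ⟨⟨fun h => h.isLocalRing_end, fun _ => .of_isLocalRing_end⟩,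
    fun h f => ⟨fun hf => LinearMap.ker_eq_bot.2 ((Module.End.isUnit_iff f).1 hf).1,
      fun hf => h.isUnit_of_injective (LinearMap.ker_eq_bot.1 hf)⟩⟩
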